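/- For τ in the upper half-plane and z ∈ ℂ, ϑ₁₁(2τ, z + τ − 1/2) · ϑ₁₁(2τ, z − τ + 1/2) = − q^{−1/2} ϑ₀₀(2τ, z)², where q = e^{2πiτ}. -/
import Mathlib


open Real Complex Filter Topology

noncomputable section

noncomputable def theta00 (τ z : ℂ) : ℂ :=
  ∑' n : ℤ, Complex.exp (2*(π:ℂ)*Complex.I*(n:ℂ)*z) *
    Complex.exp (2*(π:ℂ)*Complex.I*τ*((n:ℂ)^2/2))

noncomputable def theta01 (τ z : ℂ) : ℂ :=
  ∑' n : ℤ, (-1:ℂ)^n * Complex.exp (2*(π:ℂ)*Complex.I*(n:ℂ)*z) *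
    Complex.exp (2*(π:ℂ)*Complex.I*τ*((n:ℂ)^2/2))

noncomputable def theta10 (τ z : ℂ) : ℂ :=
  ∑' n : ℤ, Complex.exp (2*(π:ℂ)*Complex.I*((n:ℂ)+1/2)*z) *
    Complex.exp (2*(π:ℂ)*Complex.I*τ*((1/2)*((n:ℂ)+1/2)^2))

noncomputable def theta11 (τ z : ℂ) : ℂ :=
  Complex.I * ∑' n : ℤ, (-1:ℂ)^n * Complex.exp (2*(π:ℂ)*Complex.I*((n:ℂ)+1/2)*z) *
    Complex.exp (2*(π:ℂ)*Complex.I*τ*((1/2)*((n:ℂ)+1/2)^2))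

lemma neg_one_zpow_eq_exp (n : ℤ) :
    Complex.exp ((n:ℂ)*((π:ℂ)*Complex.I)) = (-1:ℂ)^n := by
  rw [Complex.exp_int_mul, Complex.exp_pi_mul_I]

lemma neg_one_zpow_eq_exp_neg (n : ℤ) :
    Complex.exp (-(n:ℂ)*((π:ℂ)*Complex.I)) = (-1:ℂ)^n := by
  rw [show (-(n:ℂ)*((π:ℂ)*Complex.I)) = ((-n:ℤ):ℂ) * ((π:ℂ)*Complex.I) by push_cast; ring,
    Complex.exp_int_mul, Complex.exp_pi_mul_I, zpow_neg, ← inv_zpow]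
  norm_num

lemma aux1 (τ z : ℂ) :
    theta11 (2*τ) (z + τ - 1/2) =
      Complex.I * (Complex.exp (-((π:ℂ)*Complex.I)/2 + 2*(π:ℂ)*Complex.I*τ*(-(1/4))
          - (π:ℂ)*Complex.I*z) * theta00 (2*τ) z) := by
  unfold theta11 theta00
  congr 1
  set c : ℂ := Complex.exp (-((π:ℂ)*Complex.I)/2 + 2*(π:ℂ)*Complex.I*τ*(-(1/4))
          - (π:ℂ)*Complex.I*z) with hc
  have key : ∀ n : ℤ, (-1:ℂ)^n * Complex.exp (2*(π:ℂ)*Complex.I*((n:ℂ)+1/2)*(z + τ - 1/2)) *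
      Complex.exp (2*(π:ℂ)*Complex.I*(2*τ)*((1/2)*((n:ℂ)+1/2)^2)) =
      c * ((fun m : ℤ => Complex.exp (2*(π:ℂ)*Complex.I*(m:ℂ)*z) *
        Complex.exp (2*(π:ℂ)*Complex.I*(2*τ)*((m:ℂ)^2/2))) (n + 1)) := by
    intro n
    simp only [hc]
    rw [← neg_one_zpow_eq_exp n]
    simp only [← Complex.exp_add]
    congr 1
    push_cast
    ring
  calc (∑' n : ℤ, (-1:ℂ)^n * Complex.exp (2*(π:ℂ)*Complex.I*((n:ℂ)+1/2)*(z + τ - 1/2)) *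
      Complex.exp (2*(π:ℂ)*Complex.I*(2*τ)*((1/2)*((n:ℂ)+1/2)^2)))
      = ∑' n : ℤ, c * ((fun m : ℤ => Complex.exp (2*(π:ℂ)*Complex.I*(m:ℂ)*z) *
        Complex.exp (2*(π:ℂ)*Complex.I*(2*τ)*((m:ℂ)^2/2))) (n + 1)) := tsum_congr key
    _ = c * ∑' n : ℤ, ((fun m : ℤ => Complex.exp (2*(π:ℂ)*Complex.I*(m:ℂ)*z) *
        Complex.exp (2*(π:ℂ)*Complex.I*(2*τ)*((m:ℂ)^2/2))) (n + 1)) := tsum_mul_left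
    _ = c * ∑' n : ℤ, Complex.exp (2*(π:ℂ)*Complex.I*(n:ℂ)*z) *
        Complex.exp (2*(π:ℂ)*Complex.I*(2*τ)*((n:ℂ)^2/2)) := by
        congr 1
        exact (Equiv.addRight (1:ℤ)).tsum_eq
          (fun m : ℤ => Complex.exp (2*(π:ℂ)*Complex.I*(m:ℂ)*z) *
            Complex.exp (2*(π:ℂ)*Complex.I*(2*τ)*((m:ℂ)^2/2)))

lemma aux2 (τ z : ℂ) :
    theta11 (2*τ) (z - τ + 1/2) =
      Complex.I * (Complex.exp (((π:ℂ)*Complex.I)/2 + 2*(π:ℂ)*Complex.I*τ*(-(1/4))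
          + (π:ℂ)*Complex.I*z) * theta00 (2*τ) z) := by
  unfold theta11 theta00
  congr 1
  set c : ℂ := Complex.exp (((π:ℂ)*Complex.I)/2 + 2*(π:ℂ)*Complex.I*τ*(-(1/4))
          + (π:ℂ)*Complex.I*z) with hc
  have key : ∀ n : ℤ, (-1:ℂ)^n * Complex.exp (2*(π:ℂ)*Complex.I*((n:ℂ)+1/2)*(z - τ + 1/2)) *
      Complex.exp (2*(π:ℂ)*Complex.I*(2*τ)*((1/2)*((n:ℂ)+1/2)^2)) =
      c * (Complex.exp (2*(π:ℂ)*Complex.I*(n:ℂ)*z) *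
        Complex.exp (2*(π:ℂ)*Complex.I*(2*τ)*((n:ℂ)^2/2))) := by
    intro n
    simp only [hc]
    rw [← neg_one_zpow_eq_exp_neg n]
    simp only [← Complex.exp_add]
    congr 1
    push_cast
    ring
  calc (∑' n : ℤ, (-1:ℂ)^n * Complex.exp (2*(π:ℂ)*Complex.I*((n:ℂ)+1/2)*(z - τ + 1/2)) *
      Complex.exp (2*(π:ℂ)*Complex.I*(2*τ)*((1/2)*((n:ℂ)+1/2)^2)))
      = ∑' n : ℤ, c * (Complex.exp (2*(π:ℂ)*Complex.I*(n:ℂ)*z) *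
        Complex.exp (2*(π:ℂ)*Complex.I*(2*τ)*((n:ℂ)^2/2))) := tsum_congr key
    _ = c * ∑' n : ℤ, Complex.exp (2*(π:ℂ)*Complex.I*(n:ℂ)*z) *
        Complex.exp (2*(π:ℂ)*Complex.I*(2*τ)*((n:ℂ)^2/2)) := by
        rw [← tsum_mul_left]

theorem stmt13 (τ z : ℂ) (hτ : 0 < τ.im) :
    theta11 (2*τ) (z + τ - 1/2) * theta11 (2*τ) (z - τ + 1/2) =
      -(Complex.exp (2*(π:ℂ)*Complex.I*τ*(-(1/2))) * (theta00 (2*τ) z)^2) := by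
  rw [aux1, aux2]
  have h : (Complex.exp (-((π:ℂ)*Complex.I)/2 + 2*(π:ℂ)*Complex.I*τ*(-(1/4))
      - (π:ℂ)*Complex.I*z)) * (Complex.exp (((π:ℂ)*Complex.I)/2 + 2*(π:ℂ)*Complex.I*τ*(-(1/4))
      + (π:ℂ)*Complex.I*z)) = Complex.exp (2*(π:ℂ)*Complex.I*τ*(-(1/2))) := by
    rw [← Complex.exp_add]
    congr 1
    ring
  calc Complex.I * (Complex.exp (-((π:ℂ)*Complex.I)/2 + 2*(π:ℂ)*Complex.I*τ*(-(1/4))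
          - (π:ℂ)*Complex.I*z) * theta00 (2*τ) z) *
        (Complex.I * (Complex.exp (((π:ℂ)*Complex.I)/2 + 2*(π:ℂ)*Complex.I*τ*(-(1/4))
          + (π:ℂ)*Complex.I*z) * theta00 (2*τ) z))
      = (Complex.I * Complex.I) * ((Complex.exp (-((π:ℂ)*Complex.I)/2
          + 2*(π:ℂ)*Complex.I*τ*(-(1/4)) - (π:ℂ)*Complex.I*z)) *
          (Complex.exp (((π:ℂ)*Complex.I)/2 + 2*(π:ℂ)*Complex.I*τ*(-(1/4))
          + (π:ℂ)*Complex.I*z))) * (theta00 (2*τ) z)^2 := by ring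
    _ = -(Complex.exp (2*(π:ℂ)*Complex.I*τ*(-(1/2))) * (theta00 (2*τ) z)^2) := by
        rw [Complex.I_mul_I, h]; ring

end
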